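/- Let Q be a polynomial with real coefficients, let n be an integer with n ≥ deg Q, write Q = Σ_{i=0}^n q_i Xⁱ, and let a < b be real numbers. Define the polynomial R = Σ_{i=0}^n q_i (bX+a)ⁱ(X+1)^{n−i} (so that R(x) = (x+1)ⁿ Q((bx+a)/(x+1)) for x ≠ −1). Then Q(y) ≥ 0 for all y ∈ [a,b] if and only if R(x) ≥ 0 for all real x ≥ 0. -/

import Mathlib

/-!
The substitution `y = (b x + a) / (x + 1)` maps `[0, ∞)` bijectively onto `[a, b)`, and on it
`R(x) = (x + 1)ⁿ Q(y)` with `(x + 1)ⁿ > 0`. So `R ≥ 0` on `[0, ∞)` iff `Q ≥ 0` on `[a, b)`, and by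
continuity of `Q` the latter is the same as `Q ≥ 0` on `[a, b]`.
-/

open Polynomial Set

theorem eval_sum_homogenize {K : Type*} [Field K] (Q : K[X]) {n : ℕ} (hn : Q.natDegree ≤ n)
    (a b : K) {x : K} (hx : x + 1 ≠ 0) :
    (∑ i ∈ Finset.range (n + 1), C (Q.coeff i) * (C b * X + C a) ^ i * (X + 1) ^ (n - i)).eval x
      = (x + 1) ^ n * Q.eval ((b * x + a) / (x + 1)) := by
  rw [eval_finsetSum, eval_eq_sum_range' (Nat.lt_succ_of_le hn), Finset.mul_sum]
  refine Finset.sum_congr rfl fun i hi => ?_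
  have hsplit : (x + 1) ^ n = (x + 1) ^ (n - i) * (x + 1) ^ i := by
    rw [← pow_add, Nat.sub_add_cancel (Nat.lt_succ_iff.mp (Finset.mem_range.mp hi))]
  simp only [eval_mul, eval_pow, eval_add, eval_C, eval_X, eval_one, div_pow, hsplit]
  field_simp

theorem mapsTo_Ici_zero_Ico {a b : ℝ} (hab : a < b) :
    MapsTo (fun x : ℝ => (b * x + a) / (x + 1)) (Ici 0) (Ico a b) := by
  intro x (hx : 0 ≤ x)
  have hx1 : 0 < x + 1 := by linarith
  constructor
  · rw [le_div_iff₀ hx1]; nlinarith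
  · rw [div_lt_iff₀ hx1]; nlinarith

theorem surjOn_Ici_zero_Ico {a b : ℝ} :
    SurjOn (fun x : ℝ => (b * x + a) / (x + 1)) (Ici 0) (Ico a b) := by
  rintro z ⟨haz, hzb⟩
  have hbz : 0 < b - z := by linarith
  refine ⟨(z - a) / (b - z), div_nonneg (by linarith) hbz.le, ?_⟩
  have hba : b - a ≠ 0 := by linarith
  field_simp
  ring

theorem nonneg_on_Icc_of_nonneg_on_Ico {f : ℝ → ℝ} (hf : Continuous f) {a b : ℝ} (hab : a ≠ b)
    (h : ∀ y ∈ Ico a b, 0 ≤ f y) : ∀ y ∈ Icc a b, 0 ≤ f y := by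
  have hclosed : IsClosed {y | 0 ≤ f y} := isClosed_le continuous_const hf
  rw [← closure_Ico hab]
  exact hclosed.closure_subset_iff.mpr h

/-- Let `Q` be a real polynomial, `n ≥ deg Q`, `a < b`, and let
`R = Σ_{i=0}^n q_i (bX+a)ⁱ(X+1)^{n−i}` (so `R(x) = (x+1)ⁿ Q((bx+a)/(x+1))` for
`x ≠ −1`). Then `Q(y) ≥ 0` for all `y ∈ [a,b]` iff `R(x) ≥ 0` for all `x ≥ 0`. -/
theorem nonneg_on_interval_iff_nonneg_on_halfline (Q : Polynomial ℝ) (n : ℕ)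
    (hn : Q.natDegree ≤ n) (a b : ℝ) (hab : a < b) (R : Polynomial ℝ)
    (hR : R = ∑ i ∈ Finset.range (n + 1),
      Polynomial.C (Q.coeff i) * (Polynomial.C b * Polynomial.X + Polynomial.C a) ^ i *
        (Polynomial.X + 1) ^ (n - i)) :
    (∀ y ∈ Set.Icc a b, 0 ≤ Q.eval y) ↔ (∀ x : ℝ, 0 ≤ x → 0 ≤ R.eval x) := by
  have hpos : ∀ x : ℝ, 0 ≤ x → 0 < (x + 1) ^ n := fun x hx => by positivity
  have hReval : ∀ x : ℝ, 0 ≤ x → R.eval x = (x + 1) ^ n * Q.eval ((b * x + a) / (x + 1)) :=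
    fun x hx => hR ▸ eval_sum_homogenize Q hn a b (by linarith)
  constructor
  · intro hQ x hx
    rw [hReval x hx]
    exact mul_nonneg (hpos x hx).le (hQ _ (Ico_subset_Icc_self (mapsTo_Ici_zero_Ico hab hx)))
  · intro hRnonneg
    refine nonneg_on_Icc_of_nonneg_on_Ico Q.continuous hab.ne fun y hy => ?_
    obtain ⟨x, hx, rfl⟩ := surjOn_Ici_zero_Ico hy
    have hRx := hRnonneg x hx
    rw [hReval x hx] at hRx
    exact nonneg_of_mul_nonneg_right hRx (hpos x hx)
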